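/- arXiv:2505.20379 — 4 statements merged into one kernel-verified Lean document; each statement's English description precedes it below -/
import Mathlib

section
/- Let n ≥ 1. The image of ℝ^n × (ℝ∖{0})^n × ℝ^{n×n} under the map (a, γ, Z) ↦ (π_α(a, γ, Z), π_T(a, γ, Z)) equals the set of Markovian PH representations of size n with no zero elements, i.e., the set of pairs (α, T) with α ∈ ℝ^n and T ∈ ℝ^{n×n} such that α_i > 0 for all i, ∑_{i=1}^n α_i = 1, T_{ij} > 0 for all i ≠ j, T_{ii} < 0 for all i, and ∑_{j=1}^n T_{ij} < 0 for all i. -/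
open Matrix Real

/-- Softmax of a vector: `softmaxV a i = exp (a i) / ∑ j, exp (a j)`. -/
noncomputable def softmaxV {n : ℕ} (a : Fin n → ℝ) : Fin n → ℝ :=
  fun i => Real.exp (a i) / ∑ j, Real.exp (a j)

/-- Row-wise softmax of a matrix. -/
noncomputable def softmaxRow {n : ℕ} (Z : Fin n → Fin n → ℝ) : Fin n → Fin n → ℝ :=
  fun i => softmaxV (Z i)

/-- `π_α(a, γ, Z) = softmax a`. -/
noncomputable def piAlpha {n : ℕ} (a γ : Fin n → ℝ) (Z : Fin n → Fin n → ℝ) : Fin n → ℝ :=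
  softmaxV a

/-- `π_T(a, γ, Z)`: diagonal entries `-γ i ^ 2`, off-diagonal entries
`γ i ^ 2 * softmax(Z) i j`. -/
noncomputable def piT {n : ℕ} (a γ : Fin n → ℝ) (Z : Fin n → Fin n → ℝ) :
    Fin n → Fin n → ℝ :=
  fun i j => if i = j then -(γ i) ^ 2 else (γ i) ^ 2 * softmaxRow Z i j

lemma softmaxV_pos {n : ℕ} (hn : 1 ≤ n) (a : Fin n → ℝ) (i : Fin n) :
    0 < softmaxV a i := by
  have : (0:ℝ) < ∑ j, Real.exp (a j) :=
    Finset.sum_pos (fun j _ => Real.exp_pos _) ⟨⟨0, hn⟩, Finset.mem_univ _⟩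
  exact div_pos (Real.exp_pos _) this

lemma softmaxV_sum {n : ℕ} (hn : 1 ≤ n) (a : Fin n → ℝ) :
    ∑ i, softmaxV a i = 1 := by
  have h : (0:ℝ) < ∑ j, Real.exp (a j) :=
    Finset.sum_pos (fun j _ => Real.exp_pos _) ⟨⟨0, hn⟩, Finset.mem_univ _⟩
  simp only [softmaxV, ← Finset.sum_div]
  exact div_self h.ne'

theorem stmt0 (n : ℕ) (hn : 1 ≤ n) :
    {p : (Fin n → ℝ) × (Fin n → Fin n → ℝ) |
        ∃ (a γ : Fin n → ℝ) (Z : Fin n → Fin n → ℝ), (∀ i, γ i ≠ 0) ∧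
          piAlpha a γ Z = p.1 ∧ piT a γ Z = p.2} =
    {p : (Fin n → ℝ) × (Fin n → Fin n → ℝ) |
        (∀ i, 0 < p.1 i) ∧ (∑ i, p.1 i) = 1 ∧
        (∀ i j, i ≠ j → 0 < p.2 i j) ∧ (∀ i, p.2 i i < 0) ∧
        (∀ i, (∑ j, p.2 i j) < 0)} := by
  ext ⟨α, T⟩
  simp only [Set.mem_setOf_eq]
  constructor
  · rintro ⟨a, γ, Z, hγ, h1, h2⟩
    subst h1; subst h2
    have hγ2 : ∀ i, 0 < (γ i) ^ 2 :=
      fun i => (sq_nonneg _).lt_of_ne (Ne.symm (pow_ne_zero 2 (hγ i)))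
    refine ⟨fun i => softmaxV_pos hn a i, softmaxV_sum hn a, ?_, ?_, ?_⟩
    · intro i j hij
      simp only [piT, if_neg hij]
      exact mul_pos (hγ2 i) (softmaxV_pos hn (Z i) j)
    · intro i
      simpa [piT] using hγ2 i
    · intro i
      rw [← Finset.add_sum_erase _ _ (Finset.mem_univ i)]
      have h1 : piT a γ Z i i = -(γ i)^2 := by simp [piT]
      have h2 : ∑ j ∈ Finset.univ.erase i, piT a γ Z i j
          = (γ i)^2 * (1 - softmaxV (Z i) i) := by
        have : ∑ j ∈ Finset.univ.erase i, piT a γ Z i j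
            = ∑ j ∈ Finset.univ.erase i, (γ i)^2 * softmaxV (Z i) j := by
          refine Finset.sum_congr rfl fun j hj => ?_
          simp [piT, (Finset.ne_of_mem_erase hj).symm, softmaxRow]
        rw [this, ← Finset.mul_sum, Finset.sum_erase_eq_sub (Finset.mem_univ i),
          softmaxV_sum hn]
      rw [h1, h2]
      nlinarith [mul_pos (hγ2 i) (softmaxV_pos hn (Z i) i)]
  · rintro ⟨hpos, hsum, hoff, hdiag, hrow⟩
    refine ⟨fun i => Real.log (α i), fun i => Real.sqrt (-T i i),
      fun i j => if i = j then Real.log (-∑ k, T i k) else Real.log (T i j), ?_, ?_, ?_⟩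
    · intro i
      exact (Real.sqrt_pos.mpr (by linarith [hdiag i])).ne'
    · funext i
      simp only [piAlpha, softmaxV]
      have he : ∀ j, Real.exp (Real.log (α j)) = α j := fun j => Real.exp_log (hpos j)
      simp only [he, hsum, div_one]
    · funext i j
      have hsq : (Real.sqrt (-T i i)) ^ 2 = -T i i :=
        Real.sq_sqrt (by linarith [hdiag i])
      have hS : ∑ k, Real.exp (if i = k then Real.log (-∑ k, T i k) else Real.log (T i k))
          = -T i i := by
        rw [← Finset.add_sum_erase _ _ (Finset.mem_univ i)]
        rw [if_pos rfl, Real.exp_log (by linarith [hrow i])]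
        have : ∑ k ∈ Finset.univ.erase i,
            Real.exp (if i = k then Real.log (-∑ k, T i k) else Real.log (T i k))
            = ∑ k ∈ Finset.univ.erase i, T i k := by
          refine Finset.sum_congr rfl fun k hk => ?_
          rw [if_neg (Ne.symm (Finset.ne_of_mem_erase hk)), Real.exp_log (hoff i k (Ne.symm (Finset.ne_of_mem_erase hk)))]
        rw [this, Finset.sum_erase_eq_sub (Finset.mem_univ i)]
        ring
      by_cases hij : i = j
      · subst hij
        simp [piT, hsq]
      · simp only [piT, if_neg hij, softmaxRow, softmaxV, hsq, hS]
        rw [Real.exp_log (hoff i j hij)]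
        field_simp
        exact mul_div_cancel_left₀ _ (hdiag i).ne ▸ rfl
end

section
/- Let n ≥ 1 and let (α, T) be a Markovian PH representation of size n with no zero elements, i.e., α ∈ ℝ^n and T ∈ ℝ^{n×n} satisfy α_i > 0 for all i, ∑_{i=1}^n α_i = 1, T_{ij} > 0 for all i ≠ j, T_{ii} < 0 for all i, and ∑_{j=1}^n T_{ij} < 0 for all i. Then there exist a ∈ ℝ^n, γ ∈ ℝ^n with γ_i ≠ 0 for all i, and Z ∈ ℝ^{n×n} such that π_α(a, γ, Z) = α and π_T(a, γ, Z) = T. -/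
open Matrix Real

theorem stmt2 (n : ℕ) (hn : 1 ≤ n) (α : Fin n → ℝ) (T : Fin n → Fin n → ℝ)
    (hα : ∀ i, 0 < α i) (hαs : ∑ i, α i = 1)
    (hToff : ∀ i j, i ≠ j → 0 < T i j) (hTdiag : ∀ i, T i i < 0)
    (hTrow : ∀ i, (∑ j, T i j) < 0) :
    ∃ (a γ : Fin n → ℝ) (Z : Fin n → Fin n → ℝ), (∀ i, γ i ≠ 0) ∧
      piAlpha a γ Z = α ∧ piT a γ Z = T := by
  -- residual mass for the diagonal of Z
  set r : Fin n → ℝ := fun i => -T i i - ∑ j ∈ Finset.univ.erase i, T i j with hr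
  have hrpos : ∀ i, 0 < r i := by
    intro i
    have hsplit : ∑ j, T i j = T i i + ∑ j ∈ Finset.univ.erase i, T i j :=
      (Finset.add_sum_erase _ _ (Finset.mem_univ i)).symm
    have := hTrow i
    simp only [hr]
    linarith [hsplit ▸ this]
  refine ⟨fun i => Real.log (α i), fun i => Real.sqrt (-T i i),
    fun i j => if i = j then Real.log (r i) else Real.log (T i j), ?_, ?_, ?_⟩
  · intro i
    have : (0:ℝ) < -T i i := by linarith [hTdiag i]
    positivity
  · funext i
    simp only [piAlpha, softmaxV]
    have hexp : ∀ j, Real.exp (Real.log (α j)) = α j := fun j => Real.exp_log (hα j)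
    simp only [hexp]
    rw [hαs, div_one]
  · funext i j
    have hγsq : Real.sqrt (-T i i) ^ 2 = -T i i := by
      exact Real.sq_sqrt (by linarith [hTdiag i])
    have hsum : ∑ k, Real.exp (if i = k then Real.log (r i) else Real.log (T i k)) = -T i i := by
      rw [← Finset.add_sum_erase _ _ (Finset.mem_univ i)]
      have h1 : ∀ k ∈ Finset.univ.erase i,
          Real.exp (if i = k then Real.log (r i) else Real.log (T i k)) = T i k := by
        intro k hk
        have hne : i ≠ k := fun h => (Finset.ne_of_mem_erase hk) h.symm
        rw [if_neg hne, Real.exp_log (hToff i k hne)]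
      rw [Finset.sum_congr rfl h1, if_pos rfl, Real.exp_log (hrpos i)]
      simp only [hr]; ring
    simp only [piT, softmaxRow, softmaxV, hγsq]
    by_cases h : i = j
    · subst h; simp
    · rw [if_neg h, hsum, if_neg h, Real.exp_log (hToff i j h)]
      have hTii : T i i ≠ 0 := (hTdiag i).ne
      field_simp
end

section
/- Let n ≥ 1, a, γ ∈ ℝ^n and Z ∈ ℝ^{n×n}, and suppose γ_i ≠ 0 for all i. Then the matrix π_T(a, γ, Z) is invertible. -/
open Matrix Real

theorem stmt4 (n : ℕ) (hn : 1 ≤ n) (a γ : Fin n → ℝ) (Z : Fin n → Fin n → ℝ)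
    (hγ : ∀ i, γ i ≠ 0) :
    IsUnit (Matrix.of (piT a γ Z)) := by
  rw [Matrix.isUnit_iff_isUnit_det, isUnit_iff_ne_zero]
  apply det_ne_zero_of_sum_row_lt_diag
  intro k
  have hS : (0:ℝ) < ∑ j, Real.exp (Z k j) :=
    Finset.sum_pos (fun j _ => Real.exp_pos _) ⟨⟨0, hn⟩, Finset.mem_univ _⟩
  have hs : ∀ j, 0 < softmaxRow Z k j := fun j =>
    div_pos (Real.exp_pos _) hS
  have hsum : ∑ j, softmaxRow Z k j = 1 := by
    simp only [softmaxRow, softmaxV, ← Finset.sum_div]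
    exact div_self hS.ne'
  have hγ2 : (0:ℝ) < (γ k) ^ 2 := by have h := hγ k; positivity
  have key : ∑ j ∈ Finset.univ.erase k, softmaxRow Z k j < 1 := by
    have := Finset.add_sum_erase Finset.univ (softmaxRow Z k) (Finset.mem_univ k)
    nlinarith [hs k]
  calc ∑ j ∈ Finset.univ.erase k, ‖Matrix.of (piT a γ Z) k j‖
      = ∑ j ∈ Finset.univ.erase k, (γ k)^2 * softmaxRow Z k j := by
        apply Finset.sum_congr rfl
        intro j hj
        have hjk : k ≠ j := (Finset.ne_of_mem_erase hj).symm
        simp only [Matrix.of_apply, piT, if_neg hjk, Real.norm_eq_abs]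
        exact abs_of_pos (mul_pos hγ2 (hs j))
    _ = (γ k)^2 * ∑ j ∈ Finset.univ.erase k, softmaxRow Z k j := by
        rw [Finset.mul_sum]
    _ < (γ k)^2 * 1 := by exact (mul_lt_mul_iff_right₀ hγ2).mpr key
    _ = ‖Matrix.of (piT a γ Z) k k‖ := by
        simp [piT, Real.norm_eq_abs, abs_of_pos hγ2]
end

section
/- Let n ≥ 1, l ≥ 1, and let m_1, …, m_l ∈ ℝ be target moments and w_1, …, w_l ∈ ℝ be weights. Define F : ℝ^n × ℝ^n × ℝ^{n×n} → ℝ by F(a, γ, Z) = ∑_{i=1}^{l} w_i ( i! (−1)^i · π_α(a, γ, Z) · π_T(a, γ, Z)^{−i} · 𝟙_n − m_i )^2, where π_α(a, γ, Z) is treated as a row vector, π_T(a, γ, Z)^{−i} is the i-th power of the matrix inverse of π_T(a, γ, Z), and 𝟙_n is the column vector of ones. Then F is differentiable at every point (a, γ, Z) with γ_i ≠ 0 for all i. -/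
open Matrix Real



section aux
variable {E : Type*} [NormedAddCommGroup E] [NormedSpace ℝ E] {n : ℕ} {p : E}

lemma diff_finset_prod {ι : Type*} [DecidableEq ι] {u : Finset ι} {f : ι → E → ℝ}
    (h : ∀ i ∈ u, DifferentiableAt ℝ (f i) p) :
    DifferentiableAt ℝ (fun q => ∏ i ∈ u, f i q) p :=
  (HasFDerivAt.finset_prod fun i hi => (h i hi).hasFDerivAt).differentiableAt

lemma diff_det {M : E → Matrix (Fin n) (Fin n) ℝ}
    (h : ∀ i j, DifferentiableAt ℝ (fun q => M q i j) p) :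
    DifferentiableAt ℝ (fun q => (M q).det) p := by
  simp only [Matrix.det_apply']
  refine DifferentiableAt.fun_sum fun σ _ => DifferentiableAt.const_mul ?_ _
  exact diff_finset_prod fun i _ => h (σ i) i

lemma diff_inv_entry {M : E → Matrix (Fin n) (Fin n) ℝ}
    (h : ∀ i j, DifferentiableAt ℝ (fun q => M q i j) p)
    (hdet : (M p).det ≠ 0) :
    ∀ i j, DifferentiableAt ℝ (fun q => (M q)⁻¹ i j) p := by
  intro i j
  simp only [Matrix.inv_def, Matrix.smul_apply, smul_eq_mul, Ring.inverse_eq_inv']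
  refine DifferentiableAt.mul ((diff_det h).inv hdet) ?_
  simp only [Matrix.adjugate_apply]
  apply diff_det
  intro k l
  simp only [Matrix.updateRow_apply]
  by_cases hk : k = j
  · simp [hk]
  · simpa [hk] using h k l

lemma diff_pow_entry {M : E → Matrix (Fin n) (Fin n) ℝ}
    (h : ∀ i j, DifferentiableAt ℝ (fun q => M q i j) p) (k : ℕ) :
    ∀ i j, DifferentiableAt ℝ (fun q => (M q ^ k) i j) p := by
  induction k with
  | zero =>
    intro i j
    simp only [pow_zero, Matrix.one_apply]
    exact differentiableAt_const _
  | succ k ih =>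
    intro i j
    simp only [pow_succ, Matrix.mul_apply]
    exact DifferentiableAt.fun_sum fun r _ => (ih i r).mul (h r j)

end aux

theorem stmt12 (n l : ℕ) (hn : 1 ≤ n) (hl : 1 ≤ l)
    (m w : Fin l → ℝ) (a γ : Fin n → ℝ) (Z : Fin n → Fin n → ℝ)
    (hγ : ∀ i, γ i ≠ 0) :
    DifferentiableAt ℝ
      (fun p : (Fin n → ℝ) × (Fin n → ℝ) × (Fin n → Fin n → ℝ) =>
        ∑ i : Fin l, w i *
          (((i : ℕ) + 1).factorial * (-1 : ℝ) ^ ((i : ℕ) + 1) *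
              ((piAlpha p.1 p.2.1 p.2.2 ᵥ*
                ((Matrix.of (piT p.1 p.2.1 p.2.2))⁻¹ ^ ((i : ℕ) + 1))) ⬝ᵥ
                (fun _ => 1)) -
            m i) ^ 2)
      (a, γ, Z) := by
  haveI : Nonempty (Fin n) := Fin.pos_iff_nonempty.mp hn
  set P := (Fin n → ℝ) × (Fin n → ℝ) × (Fin n → Fin n → ℝ)
  set p0 : P := (a, γ, Z) with hp0
  -- coordinate projections are differentiable
  have ha : ∀ i, DifferentiableAt ℝ (fun q : P => q.1 i) p0 := fun i =>
    (differentiableAt_pi.mp differentiableAt_fst) i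
  have hγd : ∀ i, DifferentiableAt ℝ (fun q : P => q.2.1 i) p0 := fun i =>
    (differentiableAt_pi.mp (differentiableAt_fst.comp p0 differentiableAt_snd)) i
  have hZd : ∀ i j, DifferentiableAt ℝ (fun q : P => q.2.2 i j) p0 := fun i j =>
    (differentiableAt_pi.mp ((differentiableAt_pi.mp
      (differentiableAt_snd.comp p0 differentiableAt_snd)) i)) j
  -- positivity of softmax denominators
  have hsum : ∀ x : Fin n → ℝ, (0:ℝ) < ∑ j, Real.exp (x j) := fun x =>
    Finset.sum_pos (fun j _ => Real.exp_pos _) Finset.univ_nonempty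
  -- differentiability of piAlpha entries
  have hαd : ∀ k, DifferentiableAt ℝ (fun q : P => piAlpha q.1 q.2.1 q.2.2 k) p0 := by
    intro k
    simp only [piAlpha, softmaxV, div_eq_mul_inv]
    exact ((ha k).exp).mul
      ((DifferentiableAt.fun_sum fun j _ => (ha j).exp).inv (ne_of_gt (hsum a)))
  -- differentiability of piT entries
  have hTd : ∀ i j, DifferentiableAt ℝ
      (fun q : P => Matrix.of (piT q.1 q.2.1 q.2.2) i j) p0 := by
    intro i j
    simp only [Matrix.of_apply, piT, softmaxRow, softmaxV, div_eq_mul_inv]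
    by_cases hij : i = j
    · simp only [if_pos hij]
      exact ((hγd i).pow 2).neg
    · simp only [if_neg hij]
      exact ((hγd i).pow 2).mul (((hZd i j).exp).mul
        ((DifferentiableAt.fun_sum fun k _ => (hZd i k).exp).inv (ne_of_gt (hsum (Z i)))))
  -- invertibility of piT at the point
  have hdet : (Matrix.of (piT a γ Z)).det ≠ 0 := by
    apply det_ne_zero_of_sum_row_lt_diag
    intro k
    have hS := hsum (Z k)
    have h1 : ∑ j ∈ Finset.univ.erase k, ‖Matrix.of (piT a γ Z) k j‖
        = (γ k) ^ 2 * ((∑ j ∈ Finset.univ.erase k, Real.exp (Z k j)) / ∑ j, Real.exp (Z k j)) := by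
      rw [Finset.sum_div, Finset.mul_sum]
      refine Finset.sum_congr rfl fun j hj => ?_
      have hjk : ¬ k = j := fun h => (Finset.mem_erase.mp hj).1 h.symm
      simp only [Matrix.of_apply, piT, if_neg hjk, softmaxRow, softmaxV]
      rw [Real.norm_eq_abs, abs_of_nonneg]
      positivity
    have h2 : ‖Matrix.of (piT a γ Z) k k‖ = (γ k) ^ 2 := by
      simp [piT, abs_of_nonneg (sq_nonneg (γ k))]
    rw [h1, h2]
    have hlt : (∑ j ∈ Finset.univ.erase k, Real.exp (Z k j)) / (∑ j, Real.exp (Z k j)) < 1 := by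
      rw [div_lt_one hS]
      exact Finset.sum_lt_sum_of_subset (Finset.erase_subset k Finset.univ)
        (Finset.mem_univ k) (Finset.notMem_erase k _) (Real.exp_pos _)
        (fun _ _ _ => (Real.exp_pos _).le)
    calc (γ k) ^ 2 * ((∑ j ∈ Finset.univ.erase k, Real.exp (Z k j)) / ∑ j, Real.exp (Z k j))
        < (γ k) ^ 2 * 1 := by
          have hk := hγ k
          exact mul_lt_mul_of_pos_left hlt (by positivity)
      _ = (γ k) ^ 2 := mul_one _
  -- inverse and powers
  have hInv := diff_inv_entry (p := p0) hTd hdet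
  have hPow : ∀ k : ℕ, ∀ i j, DifferentiableAt ℝ
      (fun q : P => ((Matrix.of (piT q.1 q.2.1 q.2.2))⁻¹ ^ k) i j) p0 :=
    fun k => diff_pow_entry hInv k
  -- assemble
  apply DifferentiableAt.fun_sum
  intro i _
  apply DifferentiableAt.const_mul
  apply DifferentiableAt.pow
  apply DifferentiableAt.sub_const
  apply DifferentiableAt.const_mul
  simp only [dotProduct, Matrix.vecMul, mul_one]
  apply DifferentiableAt.fun_sum
  intro j _
  exact DifferentiableAt.fun_sum fun k _ => (hαd k).mul (hPow _ k j)
end
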